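/- Let G = (V,E) be a directed graph with m edges and edge costs c : E → {1,...,C}, and let X, Y be disjoint k-element vertex sets. For a positive integer r, modify each edge cost to c'(e) = c(e)·r·m + w(e), where the weights w(e) are drawn independently and uniformly at random from {1,...,r}. If there exists at least one set of k pairwise vertex-disjoint simple paths connecting X to Y, then with probability at least 1 − m/r there is a unique such set of minimum total c'-cost. -/

import Mathlib

set_option autoImplicit false

open scoped Classical

noncomputable section

variable {V : Type*}

/-- The list of edge occurrences of a path given by its list of vertices. -/
def edgesOf (w : List V) : List (V × V) := w.zip w.tail

/-- A set of `k` pairwise vertex-disjoint simple directed paths connecting `X`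
to `Y`. -/
def IsPathSys (E : V → V → Prop) (X Y : Set V) (k : ℕ) (P : Finset (List V)) : Prop :=
  P.card = k ∧
    (∀ w ∈ P, w ≠ [] ∧ w.Chain' E ∧ w.Nodup ∧
      (∀ a, w.head? = some a → a ∈ X) ∧ (∀ b, w.getLast? = some b → b ∈ Y)) ∧
    ∀ w ∈ P, ∀ w' ∈ P, w ≠ w' → ∀ v, v ∈ w → v ∉ w'

/-- The total cost of a path system under the edge-cost function `c'`. -/
def sysCost (c' : V × V → ℕ) (P : Finset (List V)) : ℕ :=
  ∑ w ∈ P, ((edgesOf w).map c').sum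


/-!
Call an element `e` singular for a weight assignment `ω` if some minimum-weight member of the
family contains `e` and another one does not. If no element is singular the minimum is attained
only once. Fixing `ω` away from `e`, singularity of `e` forces `w e (ω e)` to take one specific
value, so at most one of the `r` choices of `ω e` makes `e` singular; a union bound over the `m`
edges gives failure probability at most `m / r`.

Path systems fit this frame because, for disjoint `X` and `Y`, a path system is determined by its
edge set: every vertex has at most one outgoing edge, and each path is the maximal walk from its
first vertex, which has an outgoing edge because a one-vertex path would meet `X ∩ Y`.
-/

namespace List

variable {α : Type*}

theorem eq_of_isChain_of_head?_eq {R : α → α → Prop} (hR : ∀ a b b', R a b → R a b' → b = b') :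
    ∀ {l l' : List α}, l.IsChain R → l'.IsChain R → (∀ a ∈ l.getLast?, ∀ b, ¬R a b) →
      (∀ a ∈ l'.getLast?, ∀ b, ¬R a b) → l.head? = l'.head? → l = l'
  | [], [], _, _, _, _, _ => rfl
  | a :: t, a' :: t', hl, hl', hlast, hlast', hhead => by
    obtain rfl : a = a' := by simpa using hhead
    match t, t' with
    | [], [] => rfl
    | [], b :: _ => exact absurd hl'.rel (hlast a rfl b)
    | b :: _, [] => exact absurd hl.rel (hlast' a rfl b)
    | b :: s, b' :: s' =>
      obtain rfl : b = b' := hR a b b' hl.rel hl'.rel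
      exact congrArg (a :: ·) (eq_of_isChain_of_head?_eq hR hl.tail hl'.tail hlast hlast' rfl)

end List

section Edges

@[simp]
theorem edgesOf_nil : edgesOf ([] : List V) = [] := rfl

@[simp]
theorem edgesOf_singleton (a : V) : edgesOf [a] = [] := rfl

@[simp]
theorem edgesOf_cons_cons (a b : V) (t : List V) :
    edgesOf (a :: b :: t) = (a, b) :: edgesOf (b :: t) := rfl

theorem mem_of_mem_edgesOf {w : List V} {a b : V} (h : (a, b) ∈ edgesOf w) : a ∈ w ∧ b ∈ w :=
  (List.of_mem_zip h).imp id List.mem_of_mem_tail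

theorem isChain_iff_forall_mem_edgesOf {R : V → V → Prop} :
    ∀ {w : List V}, w.IsChain R ↔ ∀ e ∈ edgesOf w, R e.1 e.2
  | [] | [_] => by simp
  | a :: b :: t => by
    simp [List.isChain_cons_cons, isChain_iff_forall_mem_edgesOf (w := b :: t)]

theorem nodup_edgesOf {w : List V} (hw : w.Nodup) : (edgesOf w).Nodup :=
  List.Nodup.of_map Prod.snd <| by
    rw [edgesOf, List.map_snd_zip (by simp)]
    exact hw.sublist (List.tail_sublist w)

theorem eq_of_mem_edgesOf_of_nodup {w : List V} (hw : w.Nodup) {a b b' : V} :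
    (a, b) ∈ edgesOf w → (a, b') ∈ edgesOf w → b = b' := by
  induction w with
  | nil => simp
  | cons x t ih =>
    match t, hw, ih with
    | [], _, _ => simp
    | y :: t, hw, ih =>
      rw [List.nodup_cons] at hw
      simp only [edgesOf_cons_cons, List.mem_cons, Prod.mk.injEq]
      rintro (⟨rfl, rfl⟩ | h) (⟨ha, rfl⟩ | h')
      · rfl
      · exact absurd (mem_of_mem_edgesOf h').1 hw.1
      · exact absurd (ha ▸ (mem_of_mem_edgesOf h).1) hw.1
      · exact ih hw.2 h h'

theorem notMem_edgesOf_of_getLast? {w : List V} (hw : w.Nodup) {a : V} (ha : a ∈ w.getLast?)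
    (b : V) : (a, b) ∉ edgesOf w := by
  induction w with
  | nil => simp
  | cons x t ih =>
    match t, hw, ih, ha with
    | [], _, _, _ => simp
    | y :: t, hw, ih, ha =>
      rw [List.nodup_cons] at hw
      rw [List.getLast?_cons_cons] at ha
      simp only [edgesOf_cons_cons, List.mem_cons, Prod.mk.injEq, not_or]
      exact ⟨fun h => hw.1 (h.1 ▸ List.mem_of_getLast? ha), ih hw.2 ha⟩

end Edges

section PathSystems

variable {R : V → V → Prop} {X Y : Set V} {k k' : ℕ} {P Q : Finset (List V)}

def sysEdges (P : Finset (List V)) : Finset (V × V) :=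
  P.biUnion fun w => (edgesOf w).toFinset

theorem mem_sysEdges {e : V × V} : e ∈ sysEdges P ↔ ∃ w ∈ P, e ∈ edgesOf w := by
  simp [sysEdges]

theorem isChain_sysEdges_of_mem {p : List V} (hp : p ∈ P) :
    p.IsChain fun a b => (a, b) ∈ sysEdges P :=
  isChain_iff_forall_mem_edgesOf.2 fun _ he => mem_sysEdges.2 ⟨p, hp, he⟩

namespace IsPathSys

theorem eq_of_mem_of_mem (hP : IsPathSys R X Y k P) {w w' : List V} (hw : w ∈ P) (hw' : w' ∈ P)
    {v : V} (hv : v ∈ w) (hv' : v ∈ w') : w = w' := by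
  by_contra hne
  exact hP.2.2 w hw w' hw' hne v hv hv'

theorem sysCost_eq_sum (hP : IsPathSys R X Y k P) (g : V × V → ℕ) :
    sysCost g P = ∑ e ∈ sysEdges P, g e := by
  rw [sysEdges, Finset.sum_biUnion]
  · exact Finset.sum_congr rfl fun w hw =>
      (List.sum_toFinset g (nodup_edgesOf (hP.2.1 w hw).2.2.1)).symm
  · intro w hw w' hw' hne
    refine Finset.disjoint_left.2 fun ⟨a, b⟩ he he' => ?_
    rw [List.mem_toFinset] at he he'
    exact hne (hP.eq_of_mem_of_mem hw hw' (mem_of_mem_edgesOf he).1 (mem_of_mem_edgesOf he').1)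

theorem sysEdges_subset {F : Finset (V × V)} (hP : IsPathSys (fun u v => (u, v) ∈ F) X Y k P) :
    sysEdges P ⊆ F := by
  intro e he
  obtain ⟨w, hw, hew⟩ := mem_sysEdges.1 he
  exact isChain_iff_forall_mem_edgesOf.1 (hP.2.1 w hw).2.1 e hew

theorem eq_of_mem_sysEdges (hP : IsPathSys R X Y k P) {a b b' : V} (h : (a, b) ∈ sysEdges P)
    (h' : (a, b') ∈ sysEdges P) : b = b' := by
  obtain ⟨w, hw, he⟩ := mem_sysEdges.1 h
  obtain ⟨w', hw', he'⟩ := mem_sysEdges.1 h'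
  obtain rfl := hP.eq_of_mem_of_mem hw hw' (mem_of_mem_edgesOf he).1 (mem_of_mem_edgesOf he').1
  exact eq_of_mem_edgesOf_of_nodup (hP.2.1 w hw).2.2.1 he he'

theorem notMem_sysEdges_of_getLast? (hP : IsPathSys R X Y k P) {p : List V} (hp : p ∈ P)
    {a : V} (ha : a ∈ p.getLast?) (b : V) : (a, b) ∉ sysEdges P := by
  intro h
  obtain ⟨w, hw, he⟩ := mem_sysEdges.1 h
  obtain rfl := hP.eq_of_mem_of_mem hw hp (mem_of_mem_edgesOf he).1 (List.mem_of_getLast? ha)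
  exact notMem_edgesOf_of_getLast? (hP.2.1 w hw).2.2.1 ha b he

theorem exists_suffix_of_sysEdges_eq (hXY : Disjoint X Y) (hP : IsPathSys R X Y k P)
    (hQ : IsPathSys R X Y k' Q) (h : sysEdges P = sysEdges Q) {p : List V} (hp : p ∈ P) :
    ∃ q ∈ Q, p <:+ q := by
  obtain ⟨hne, -, -, hX, hY⟩ := hP.2.1 p hp
  obtain ⟨a, b, s, rfl⟩ : ∃ a b s, p = a :: b :: s := by
    match p, hne, hX, hY with
    | [a], _, hX, hY => exact absurd (hY a rfl) (Set.disjoint_left.1 hXY (hX a rfl))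
    | a :: b :: s, _, _, _ => exact ⟨a, b, s, rfl⟩
  have hab : (a, b) ∈ sysEdges Q := h ▸ mem_sysEdges.2 ⟨_, hp, by simp⟩
  obtain ⟨q, hq, hab⟩ := mem_sysEdges.1 hab
  obtain ⟨q₁, q₂, rfl⟩ := List.append_of_mem (mem_of_mem_edgesOf hab).1
  refine ⟨q₁ ++ a :: q₂, hq, ?_⟩
  have : a :: b :: s = a :: q₂ :=
    List.eq_of_isChain_of_head?_eq (R := fun a b => (a, b) ∈ sysEdges Q)
      (fun _ _ _ => hQ.eq_of_mem_sysEdges)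
      (h ▸ isChain_sysEdges_of_mem hp) (isChain_sysEdges_of_mem hq).right_of_append
      (fun c hc => h ▸ hP.notMem_sysEdges_of_getLast? hp hc)
      (fun c hc =>
        hQ.notMem_sysEdges_of_getLast? hq (a := c) (by rwa [List.getLast?_append_cons]))
      rfl
  rw [this]
  exact List.suffix_append _ _

theorem eq_of_sysEdges_eq (hXY : Disjoint X Y) (hP : IsPathSys R X Y k P)
    (hQ : IsPathSys R X Y k Q) (h : sysEdges P = sysEdges Q) : P = Q := by
  refine Finset.eq_of_subset_of_card_le (fun p hp => ?_) (hP.1 ▸ hQ.1 ▸ le_rfl)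
  obtain ⟨q, hq, hpq⟩ := exists_suffix_of_sysEdges_eq hXY hP hQ h hp
  obtain ⟨p', hp', hqp'⟩ := exists_suffix_of_sysEdges_eq hXY hQ hP h.symm hq
  obtain ⟨a, t, rfl⟩ := List.exists_cons_of_ne_nil (hP.2.1 _ hp).1
  obtain rfl := hP.eq_of_mem_of_mem hp hp' List.mem_cons_self
    ((hpq.trans hqp').subset List.mem_cons_self)
  rwa [hpq.eq_of_length (le_antisymm hpq.length_le hqp'.length_le)]

end IsPathSys

def pathSysEdgeSets [Fintype V] (R : V → V → Prop) (X Y : Set V) (k : ℕ) :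
    Finset (Finset (V × V)) :=
  {S | ∃ P, IsPathSys R X Y k P ∧ sysEdges P = S}

theorem exists_unique_min_sysCost_of_unique_min_sum [Fintype V] (hXY : Disjoint X Y)
    {g : V × V → ℕ}
    (h : ∃ S ∈ pathSysEdgeSets R X Y k, ∀ T ∈ pathSysEdgeSets R X Y k, T ≠ S →
      ∑ e ∈ S, g e < ∑ e ∈ T, g e) :
    ∃ P, IsPathSys R X Y k P ∧ ∀ Q, IsPathSys R X Y k Q → Q ≠ P → sysCost g P < sysCost g Q := by
  obtain ⟨S, hS, hmin⟩ := h
  obtain ⟨P, hP, rfl⟩ := (Finset.mem_filter.1 hS).2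
  refine ⟨P, hP, fun Q hQ hQP => ?_⟩
  rw [hP.sysCost_eq_sum, hQ.sysCost_eq_sum]
  exact hmin _ (Finset.mem_filter.2 ⟨Finset.mem_univ _, Q, hQ, rfl⟩)
    fun h => hQP (hQ.eq_of_sysEdges_eq hXY hP h)

end PathSystems

section Isolation

open Finset

variable {α M : Type*} [AddCommMonoid M] [LinearOrder M] {r : ℕ} (w : α → Fin r → M)
  (𝓕 : Finset (Finset α))

def IsMinWeight (ω : α → Fin r) (S : Finset α) : Prop :=
  S ∈ 𝓕 ∧ ∀ T ∈ 𝓕, ∑ e ∈ S, w e (ω e) ≤ ∑ e ∈ T, w e (ω e)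

def IsSingular (ω : α → Fin r) (e : α) : Prop :=
  (∃ S, IsMinWeight w 𝓕 ω S ∧ e ∈ S) ∧ ∃ T, IsMinWeight w 𝓕 ω T ∧ e ∉ T

variable {w 𝓕}

theorem exists_unique_min_of_forall_not_isSingular (h𝓕 : 𝓕.Nonempty) {ω : α → Fin r}
    (h : ∀ e, ¬IsSingular w 𝓕 ω e) :
    ∃ S ∈ 𝓕, ∀ T ∈ 𝓕, T ≠ S → ∑ e ∈ S, w e (ω e) < ∑ e ∈ T, w e (ω e) := by
  obtain ⟨S, hS, hmin⟩ := 𝓕.exists_min_image (fun S => ∑ e ∈ S, w e (ω e)) h𝓕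
  refine ⟨S, hS, fun T hT hTS => (hmin T hT).lt_of_ne fun heq => ?_⟩
  have hTmin : IsMinWeight w 𝓕 ω T := ⟨hT, fun U hU => heq ▸ hmin U hU⟩
  obtain ⟨e, he⟩ : ∃ e, ¬(e ∈ T ↔ e ∈ S) := by simpa [Finset.ext_iff] using hTS
  by_cases heS : e ∈ S
  · exact h e ⟨⟨S, ⟨hS, hmin⟩, heS⟩, T, hTmin, by tauto⟩
  · exact h e ⟨⟨T, hTmin, by tauto⟩, S, ⟨hS, hmin⟩, heS⟩

variable [IsOrderedCancelAddMonoid M] [DecidableEq α]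

/-- Singularity of `e` forces `a + w e (ω e) = b`, where `a` is the least weight of `S.erase e`
over `S ∈ 𝓕` containing `e` and `b` the least weight of a member of `𝓕` avoiding `e`; neither
depends on `ω e`. -/
theorem IsSingular.eq_of_eqOn_compl (hw : ∀ e, Function.Injective (w e)) {ω ω' : α → Fin r}
    {e : α} (hoff : ∀ z ≠ e, ω z = ω' z) (h : IsSingular w 𝓕 ω e) (h' : IsSingular w 𝓕 ω' e) :
    ω e = ω' e := by
  obtain ⟨⟨S, ⟨hS, hSmin⟩, heS⟩, T, ⟨hT, hTmin⟩, heT⟩ := h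
  obtain ⟨⟨S', ⟨hS', hS'min⟩, heS'⟩, T', ⟨hT', hT'min⟩, heT'⟩ := h'
  have hsplit : ∀ (σ : α → Fin r) (U : Finset α), e ∈ U →
      ∑ z ∈ U, w z (σ z) = ∑ z ∈ U.erase e, w z (σ z) + w e (σ e) :=
    fun σ U hU => (sum_erase_add _ _ hU).symm
  have hfree : ∀ U : Finset α, e ∉ U → ∑ z ∈ U, w z (ω z) = ∑ z ∈ U, w z (ω' z) :=
    fun U hU => sum_congr rfl fun z hz => by rw [hoff z (ne_of_mem_of_not_mem hz hU)]
  set A := ∑ z ∈ S.erase e, w z (ω z)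
  set B := ∑ z ∈ S'.erase e, w z (ω z)
  have hA : ∑ z ∈ S.erase e, w z (ω' z) = A := (hfree _ (notMem_erase e S)).symm
  have hB : ∑ z ∈ S'.erase e, w z (ω' z) = B := (hfree _ (notMem_erase e S')).symm
  have hSω := hsplit ω S heS
  have hSω' := hsplit ω' S heS
  have hS'ω := hsplit ω S' heS'
  have hS'ω' := hsplit ω' S' heS'
  rw [hA] at hSω'
  rw [hB] at hS'ω'
  have hμ : ∑ z ∈ T, w z (ω z) = ∑ z ∈ T', w z (ω' z) :=
    le_antisymm ((hTmin T' hT').trans_eq (hfree T' heT'))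
      ((hT'min T hT).trans_eq (hfree T heT).symm)
  have hAB : A = B := le_antisymm
    (le_of_add_le_add_right (hSω ▸ hS'ω ▸ hSmin S' hS'))
    (le_of_add_le_add_right (hS'ω' ▸ hSω' ▸ hS'min S hS))
  refine hw e (add_left_cancel (a := A) ?_)
  calc A + w e (ω e) = ∑ z ∈ T, w z (ω z) := hSω ▸ le_antisymm (hSmin T hT) (hTmin S hS)
    _ = ∑ z ∈ T', w z (ω' z) := hμ
    _ = A + w e (ω' e) := hAB ▸ hS'ω' ▸ le_antisymm (hT'min S' hS') (hS'min T' hT')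

variable [Fintype α]

theorem card_isSingular_mul_le (hw : ∀ e, Function.Injective (w e)) (e : α) :
    #{ω | IsSingular w 𝓕 ω e} * r ≤ Fintype.card (α → Fin r) := by
  calc #{ω | IsSingular w 𝓕 ω e} * r
      = #(({ω | IsSingular w 𝓕 ω e} : Finset (α → Fin r)) ×ˢ (univ : Finset (Fin r))) := by simp
    _ ≤ #(univ : Finset (α → Fin r)) := by
        refine card_le_card_of_injOn (fun p => Function.update p.1 e p.2) (by simp) ?_
        rintro ⟨ω, x⟩ hω ⟨ω', x'⟩ hω' heq
        have hoff : ∀ z ≠ e, ω z = ω' z := fun z hz => by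
          simpa [Function.update_of_ne hz] using congrFun heq z
        refine Prod.ext (funext fun z => ?_) (by simpa using congrFun heq e)
        by_cases hz : z = e
        · exact hz ▸ (mem_filter.1 (mem_product.1 hω).1).2.eq_of_eqOn_compl hw hoff
            (mem_filter.1 (mem_product.1 hω').1).2
        · exact hoff z hz
    _ = Fintype.card (α → Fin r) := card_univ

theorem card_exists_isSingular_mul_le (hw : ∀ e, Function.Injective (w e)) (E : Finset α)
    (hE : ∀ S ∈ 𝓕, S ⊆ E) :
    #{ω | ∃ e, IsSingular w 𝓕 ω e} * r ≤ #E * Fintype.card (α → Fin r) := by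
  calc #{ω | ∃ e, IsSingular w 𝓕 ω e} * r
      ≤ #(E.biUnion fun e => {ω | IsSingular w 𝓕 ω e}) * r := by
        gcongr
        intro ω
        simp only [mem_filter, mem_univ, true_and, mem_biUnion]
        rintro ⟨e, he⟩
        obtain ⟨S, hS, heS⟩ := he.1
        exact ⟨e, hE S hS.1 heS, he⟩
    _ ≤ ∑ e ∈ E, #{ω | IsSingular w 𝓕 ω e} * r := by
        rw [← sum_mul]
        gcongr
        exact card_biUnion_le
    _ ≤ ∑ _e ∈ E, Fintype.card (α → Fin r) := sum_le_sum fun e _ => card_isSingular_mul_le hw e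
    _ = #E * Fintype.card (α → Fin r) := by rw [sum_const, smul_eq_mul]

theorem isolation_lemma (hw : ∀ e, Function.Injective (w e)) (E : Finset α) (h𝓕 : 𝓕.Nonempty)
    (hE : ∀ S ∈ 𝓕, S ⊆ E) (hr : 0 < r) :
    (1 : ℚ) - #E / r ≤
      #{ω : α → Fin r | ∃ S ∈ 𝓕, ∀ T ∈ 𝓕, T ≠ S → ∑ e ∈ S, w e (ω e) < ∑ e ∈ T, w e (ω e)} /
        Fintype.card (α → Fin r) := by
  set N := Fintype.card (α → Fin r)
  set good : Finset (α → Fin r) := {ω |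
    ∃ S ∈ 𝓕, ∀ T ∈ 𝓕, T ≠ S → ∑ e ∈ S, w e (ω e) < ∑ e ∈ T, w e (ω e)}
  set bad : Finset (α → Fin r) := {ω | ∃ e, IsSingular w 𝓕 ω e}
  have hcover : N ≤ #good + #bad := by
    refine (card_le_card fun ω _ => ?_).trans (card_union_le good bad)
    by_cases hω : ∃ e, IsSingular w 𝓕 ω e
    · exact mem_union_right _ (mem_filter.2 ⟨mem_univ _, hω⟩)
    · exact mem_union_left _ (mem_filter.2 ⟨mem_univ _,
        exists_unique_min_of_forall_not_isSingular h𝓕 (not_exists.1 hω)⟩)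
  have hbad : (#bad : ℚ) ≤ #E * N / r := by
    rw [le_div_iff₀ (by exact_mod_cast hr)]
    exact_mod_cast card_exists_isSingular_mul_le hw E hE
  have hN : (0 : ℚ) < N := by
    have : Nonempty (α → Fin r) := ⟨fun _ => ⟨0, hr⟩⟩
    exact_mod_cast Fintype.card_pos
  rw [le_div_iff₀ hN]
  calc (1 - (#E : ℚ) / r) * N = N - #E * N / r := by ring
    _ ≤ #good := by linarith [(by exact_mod_cast hcover : (N : ℚ) ≤ #good + #bad)]

end Isolation

theorem isolation_for_path_systems_general (V : Type*) [Fintype V] [DecidableEq V]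
    (E : Finset (V × V)) (m : ℕ) (hm : E.card = m)
    (c : V × V → ℕ)
    (X Y : Set V) (hXY : Disjoint X Y) (k : ℕ) (r : ℕ) (hr : 0 < r)
    (hex : ∃ P, IsPathSys (fun u v => (u, v) ∈ E) X Y k P) :
    (1 : ℚ) - (m : ℚ) / (r : ℚ) ≤
      ((Finset.univ.filter (fun ω : V × V → Fin r =>
          ∃ P, IsPathSys (fun u v => (u, v) ∈ E) X Y k P ∧
            ∀ Q, IsPathSys (fun u v => (u, v) ∈ E) X Y k Q → Q ≠ P →
              sysCost (fun e => c e * r * m + ((ω e : ℕ) + 1)) P <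
                sysCost (fun e => c e * r * m + ((ω e : ℕ) + 1)) Q)).card : ℚ)
        / (Fintype.card (V × V → Fin r) : ℚ) := by
  subst hm
  set 𝓕 := pathSysEdgeSets (fun u v => (u, v) ∈ E) X Y k
  have h𝓕 : 𝓕.Nonempty := by
    obtain ⟨P, hP⟩ := hex
    exact ⟨sysEdges P, Finset.mem_filter.2 ⟨Finset.mem_univ _, P, hP, rfl⟩⟩
  have hE : ∀ S ∈ 𝓕, S ⊆ E := by
    intro S hS
    obtain ⟨P, hP, rfl⟩ := (Finset.mem_filter.1 hS).2
    exact hP.sysEdges_subset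
  have hw : ∀ e, Function.Injective fun x : Fin r => c e * r * E.card + ((x : ℕ) + 1) :=
    fun e x y hxy => Fin.ext (by simpa using hxy)
  refine (isolation_lemma hw E h𝓕 hE hr).trans ?_
  gcongr
  exact exists_unique_min_sysCost_of_unique_min_sum hXY

/-- **Isolation for path systems.**  Modify each edge cost to
`c' e = c e * r * m + w e` where the weights `w e = ω e + 1 ∈ {1,...,r}` are
drawn independently and uniformly at random.  If at least one set of `k`
pairwise vertex-disjoint simple paths connecting `X` to `Y` exists, then with
probability at least `1 - m / r` there is a unique such set of minimum total
`c'`-cost. -/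
theorem isolation_for_path_systems (V : Type*) [Fintype V] [DecidableEq V]
    (E : Finset (V × V)) (m : ℕ) (hm : E.card = m)
    (C : ℕ) (c : V × V → ℕ) (hc : ∀ e ∈ E, c e ∈ Finset.Icc 1 C)
    (X Y : Set V) (hXY : Disjoint X Y) (k : ℕ) (r : ℕ) (hr : 0 < r)
    (hex : ∃ P, IsPathSys (fun u v => (u, v) ∈ E) X Y k P) :
    (1 : ℚ) - (m : ℚ) / (r : ℚ) ≤
      ((Finset.univ.filter (fun ω : V × V → Fin r =>
          ∃ P, IsPathSys (fun u v => (u, v) ∈ E) X Y k P ∧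
            ∀ Q, IsPathSys (fun u v => (u, v) ∈ E) X Y k Q → Q ≠ P →
              sysCost (fun e => c e * r * m + ((ω e : ℕ) + 1)) P <
                sysCost (fun e => c e * r * m + ((ω e : ℕ) + 1)) Q)).card : ℚ)
        / (Fintype.card (V × V → Fin r) : ℚ) :=
  isolation_for_path_systems_general V E m hm c X Y hXY k r hr hex
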